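/- Let α ∈ (0,1), ν, γ > 0, and u₀ > 0. Define t₀ > 0 by t₀^α = (u₀^{1−γ}/ν)·(g_{1−α}(1/2) + (α/γ)·2^{α+α/γ}/Γ(2−α)), and define w(t) = u₀ for t ∈ [0,t₀] and w(t) = u₀·t₀^{α/γ}·t^{−α/γ} for t ≥ t₀. Then w ∈ H¹_{1,loc}(ℝ₊), w(0) = u₀, w is nonincreasing and strictly positive, and w is a supersolution of the fractional differential equation ∂_t^α(u−u₀) + ν·u^γ = 0, i.e. (g_{1−α}⋆ẇ)(t) + ν·w(t)^γ ≥ 0 for a.a. t > 0. -/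

import Mathlib

open MeasureTheory Set Real

/-- Convolution on the positive half-line: `(f ⋆ g)(t) = ∫₀ᵗ f(t-τ) g(τ) dτ`. -/
noncomputable def conv (f g : ℝ → ℝ) (t : ℝ) : ℝ :=
  ∫ τ in (0:ℝ)..t, f (t - τ) * g τ

/-- The standard kernel `g_β(t) = t^{β-1}/Γ(β)`. -/
noncomputable def gker (β t : ℝ) : ℝ := t ^ (β - 1) / Real.Gamma β

/-!
For `t ≤ t₀` the derivative `ẇ` vanishes on `[0, t]`, so the memory term is zero. For `t > t₀`,
split `(g_{1-α} ⋆ ẇ)(t)` at `t / 2`. On `[0, t/2]` the kernel is at most `g_{1-α}(t/2)` and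
`∫₀^{t/2} ẇ = w(t/2) - u₀ ≥ -u₀`; on `[t/2, t]` one has `|ẇ| ≤ β u₀ t₀^β (t/2)^{-β-1}` with
`β = α/γ`, and the kernel integrates to `g_{2-α}(t/2)`. Both lower bounds scale like `t^{-α}`, as
does `ν w(t)^γ = ν u₀^γ t₀^α t^{-α}`, and `t₀` is chosen exactly so that the reaction term
dominates their sum.
-/

section Kernel

variable {β s t a b : ℝ}

theorem gker_nonneg (hβ : 0 < β) (ht : 0 ≤ t) : 0 ≤ gker β t :=
  div_nonneg (rpow_nonneg ht _) (Gamma_pos_of_pos hβ).le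

theorem gker_le_gker (hβ0 : 0 < β) (hβ1 : β ≤ 1) (hs : 0 < s) (hst : s ≤ t) :
    gker β t ≤ gker β s :=
  div_le_div_of_nonneg_right (rpow_le_rpow_of_nonpos hs hst (by linarith))
    (Gamma_pos_of_pos hβ0).le

theorem gker_mul (hs : 0 ≤ s) (ht : 0 ≤ t) : gker β (s * t) = s ^ (β - 1) * gker β t := by
  rw [gker, gker, mul_rpow hs ht, mul_div_assoc]

theorem continuousOn_gker_sub : ContinuousOn (fun τ => gker β (t - τ)) (Iio t) :=
  ((continuousOn_const.sub continuousOn_id).rpow_const fun _ hτ =>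
    Or.inl (sub_ne_zero.2 (ne_of_gt hτ))).div_const _

theorem intervalIntegrable_gker_sub (hβ : 0 < β) (t a b : ℝ) :
    IntervalIntegrable (fun τ => gker β (t - τ)) volume a b := by
  have := (intervalIntegral.intervalIntegrable_rpow' (a := t - b) (b := t - a)
    (by linarith : -1 < β - 1)).comp_sub_left t
  simpa only [gker, sub_sub_cancel] using (this.symm.div_const (Gamma β))

theorem integral_gker_sub (hβ : 0 < β) (s t : ℝ) :
    ∫ τ in s..t, gker β (t - τ) = gker (β + 1) (t - s) := by
  simp only [gker, intervalIntegral.integral_div]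
  rw [intervalIntegral.integral_comp_sub_left (fun x => x ^ (β - 1)), sub_self,
    integral_rpow (Or.inl (by linarith)), zero_rpow (by linarith), Gamma_add_one hβ.ne']
  simp only [sub_add_cancel, add_sub_cancel_right, sub_zero]
  field_simp

end Kernel

section ConvolutionBounds

variable {β a b s t m : ℝ} {v : ℝ → ℝ}

theorem intervalIntegrable_gker_sub_mul (hβ : 0 < β) (hv : IntervalIntegrable v volume a b)
    (hvm : ∀ τ ∈ uIcc a b, ‖v τ‖ ≤ m) :
    IntervalIntegrable (fun τ => gker β (t - τ) * v τ) volume a b := by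
  rw [intervalIntegrable_iff] at hv ⊢
  have hk := (intervalIntegrable_gker_sub hβ t a b).def'
  simp_rw [mul_comm (gker β _)]
  exact hk.bdd_mul hv.aestronglyMeasurable
    (ae_restrict_of_forall_mem measurableSet_uIoc fun τ hτ => hvm τ (uIoc_subset_uIcc hτ))

theorem gker_sub_mul_integral_le (hβ0 : 0 < β) (hβ1 : β ≤ 1) (hab : a ≤ b) (hbt : b < t)
    (hv : IntervalIntegrable v volume a b) (hv0 : ∀ τ ∈ Icc a b, v τ ≤ 0) :
    gker β (t - b) * ∫ τ in a..b, v τ ≤ ∫ τ in a..b, gker β (t - τ) * v τ := by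
  have hcont : ContinuousOn (fun τ => gker β (t - τ)) (uIcc a b) :=
    continuousOn_gker_sub.mono fun τ hτ => (uIcc_of_le hab ▸ hτ).2.trans_lt hbt
  rw [← intervalIntegral.integral_const_mul]
  refine intervalIntegral.integral_mono_on hab (hv.const_mul _) (hv.continuousOn_mul hcont)
    fun τ hτ => mul_le_mul_of_nonpos_right ?_ (hv0 τ hτ)
  exact gker_le_gker hβ0 hβ1 (by linarith) (by linarith [hτ.2])

theorem neg_mul_gker_le_integral (hβ : 0 < β) (hst : s ≤ t) (hv : IntervalIntegrable v volume s t)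
    (hvm : ∀ τ ∈ Icc s t, ‖v τ‖ ≤ m) :
    -(m * gker (β + 1) (t - s)) ≤ ∫ τ in s..t, gker β (t - τ) * v τ := by
  rw [← integral_gker_sub hβ, ← intervalIntegral.integral_const_mul,
    ← intervalIntegral.integral_neg]
  refine intervalIntegral.integral_mono_on hst
    ((intervalIntegrable_gker_sub hβ t s t).const_mul m).neg
    (intervalIntegrable_gker_sub_mul hβ hv (uIcc_of_le hst ▸ hvm)) fun τ hτ => ?_
  have hk := gker_nonneg hβ (sub_nonneg.2 hτ.2)
  nlinarith [neg_le_of_abs_le (hvm τ hτ)]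

theorem sub_le_conv_gker (hβ0 : 0 < β) (hβ1 : β ≤ 1) (ht : 0 < t)
    (hv : IntervalIntegrable v volume 0 t) (hv0 : ∀ τ ∈ Icc 0 (t / 2), v τ ≤ 0)
    (hvm : ∀ τ ∈ Icc (t / 2) t, ‖v τ‖ ≤ m) :
    gker β (t / 2) * (∫ τ in 0..t / 2, v τ) - m * gker (β + 1) (t / 2) ≤ conv (gker β) v t := by
  have hv₁ : IntervalIntegrable v volume 0 (t / 2) :=
    hv.mono_set (uIcc_subset_uIcc_left (by rw [uIcc_of_le ht.le]; constructor <;> linarith))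
  have hv₂ : IntervalIntegrable v volume (t / 2) t :=
    hv.mono_set (uIcc_subset_uIcc_right (by rw [uIcc_of_le ht.le]; constructor <;> linarith))
  have hhalf : t - t / 2 = t / 2 := by ring
  have h₁ := gker_sub_mul_integral_le (t := t) hβ0 hβ1 (by linarith) (by linarith) hv₁ hv0
  have h₂ := neg_mul_gker_le_integral (s := t / 2) hβ0 (by linarith) hv₂ hvm
  rw [hhalf] at h₁ h₂
  have hcont : ContinuousOn (fun τ => gker β (t - τ)) (uIcc 0 (t / 2)) :=
    continuousOn_gker_sub.mono fun τ hτ => by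
      rw [uIcc_of_le (by linarith)] at hτ; exact hτ.2.trans_lt (by linarith)
  rw [conv, ← intervalIntegral.integral_add_adjacent_intervals (hv₁.continuousOn_mul hcont)
    (intervalIntegrable_gker_sub_mul hβ0 hv₂ (uIcc_of_le (by linarith : t / 2 ≤ t) ▸ hvm))]
  linarith

end ConvolutionBounds

noncomputable def plateauDecay (u₀ t₀ β t : ℝ) : ℝ :=
  if t ≤ t₀ then u₀ else u₀ * t₀ ^ β * t ^ (-β)

noncomputable def plateauDecayDeriv (u₀ t₀ β t : ℝ) : ℝ :=
  if t ≤ t₀ then 0 else -(β * u₀ * t₀ ^ β * t ^ (-β - 1))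

section PlateauDecay

variable {u₀ t₀ β a b s t τ : ℝ}

theorem plateauDecay_of_le (h : t ≤ t₀) : plateauDecay u₀ t₀ β t = u₀ := if_pos h

theorem plateauDecay_of_lt (ht₀ : 0 < t₀) (h : t₀ < t) :
    plateauDecay u₀ t₀ β t = u₀ * (t₀ / t) ^ β := by
  rw [plateauDecay, if_neg h.not_ge, div_rpow ht₀.le (ht₀.trans h).le,
    rpow_neg (ht₀.trans h).le, mul_assoc, div_eq_mul_inv]

theorem plateauDecay_pos (hu₀ : 0 < u₀) (ht₀ : 0 < t₀) (t : ℝ) : 0 < plateauDecay u₀ t₀ β t := by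
  rcases le_or_gt t t₀ with h | h
  · rwa [plateauDecay_of_le h]
  · rw [plateauDecay_of_lt ht₀ h]
    have := ht₀.trans h
    positivity

theorem antitone_plateauDecay (hu₀ : 0 ≤ u₀) (ht₀ : 0 < t₀) (hβ : 0 ≤ β) :
    Antitone (plateauDecay u₀ t₀ β) := by
  intro s t hst
  rcases le_or_gt t t₀ with ht | ht
  · rw [plateauDecay_of_le ht, plateauDecay_of_le (hst.trans ht)]
  rw [plateauDecay_of_lt ht₀ ht]
  rcases le_or_gt s t₀ with hs | hs
  · rw [plateauDecay_of_le hs]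
    exact mul_le_of_le_one_right hu₀
      (rpow_le_one (div_nonneg ht₀.le (ht₀.trans ht).le) ((div_le_one (ht₀.trans ht)).2 ht.le) hβ)
  · rw [plateauDecay_of_lt ht₀ hs]
    exact mul_le_mul_of_nonneg_left (rpow_le_rpow (div_nonneg ht₀.le (ht₀.trans ht).le)
      (div_le_div_of_nonneg_left ht₀.le (ht₀.trans hs) hst) hβ) hu₀

theorem plateauDecayDeriv_of_le (h : t ≤ t₀) : plateauDecayDeriv u₀ t₀ β t = 0 := if_pos h

theorem plateauDecayDeriv_nonpos (hu₀ : 0 ≤ u₀) (ht₀ : 0 < t₀) (hβ : 0 ≤ β) (t : ℝ) :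
    plateauDecayDeriv u₀ t₀ β t ≤ 0 := by
  rcases le_or_gt t t₀ with h | h
  · rw [plateauDecayDeriv_of_le h]
  · rw [plateauDecayDeriv, if_neg h.not_ge, neg_nonpos]
    have := ht₀.trans h
    positivity

theorem norm_plateauDecayDeriv_le (hu₀ : 0 ≤ u₀) (ht₀ : 0 < t₀) (hβ : 0 ≤ β) (hs : 0 < s)
    (hsτ : s ≤ τ) : ‖plateauDecayDeriv u₀ t₀ β τ‖ ≤ β * u₀ * t₀ ^ β * s ^ (-β - 1) := by
  rcases le_or_gt τ t₀ with h | h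
  · rw [plateauDecayDeriv_of_le h, norm_zero]
    positivity
  · have hτ := ht₀.trans h
    rw [plateauDecayDeriv, if_neg h.not_ge, norm_neg, Real.norm_of_nonneg (by positivity)]
    exact mul_le_mul_of_nonneg_left (rpow_le_rpow_of_nonpos hs hsτ (by linarith)) (by positivity)

theorem intervalIntegrable_plateauDecayDeriv (hu₀ : 0 ≤ u₀) (ht₀ : 0 < t₀) (hβ : 0 ≤ β)
    (a b : ℝ) : IntervalIntegrable (plateauDecayDeriv u₀ t₀ β) volume a b := by
  refine (intervalIntegrable_const (c := β * u₀ * t₀ ^ β * t₀ ^ (-β - 1))).mono_fun ?_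
    (ae_of_all _ fun τ => ?_)
  · exact (Measurable.ite measurableSet_Iic measurable_const (by fun_prop)).aestronglyMeasurable
  · rcases le_or_gt τ t₀ with h | h
    · simp only [plateauDecayDeriv_of_le h, norm_zero, norm_nonneg]
    · exact (norm_plateauDecayDeriv_le hu₀ ht₀ hβ ht₀ h.le).trans (le_abs_self _)

theorem integral_plateauDecayDeriv_of_le (ha : a ≤ t₀) (hb : b ≤ t₀) :
    ∫ τ in a..b, plateauDecayDeriv u₀ t₀ β τ = 0 := by
  rw [intervalIntegral.integral_congr (g := fun _ => 0), intervalIntegral.integral_zero]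
  exact fun τ hτ => plateauDecayDeriv_of_le (hτ.2.trans (max_le ha hb))

theorem conv_plateauDecayDeriv_of_le (k : ℝ → ℝ) (ht₀ : 0 ≤ t₀) (h : t ≤ t₀) :
    conv k (plateauDecayDeriv u₀ t₀ β) t = 0 := by
  rw [conv, intervalIntegral.integral_congr (g := fun _ => 0), intervalIntegral.integral_zero]
  intro τ hτ
  dsimp only
  rw [plateauDecayDeriv_of_le (hτ.2.trans (max_le ht₀ h)), mul_zero]

theorem integral_plateauDecayDeriv_of_ge (hu₀ : 0 ≤ u₀) (ht₀ : 0 < t₀) (hβ : 0 ≤ β)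
    (h : t₀ ≤ t) : ∫ τ in t₀..t, plateauDecayDeriv u₀ t₀ β τ = plateauDecay u₀ t₀ β t - u₀ := by
  have hdecay : ∀ x, t₀ ≤ x → plateauDecay u₀ t₀ β x = u₀ * t₀ ^ β * x ^ (-β) := fun x hx => by
    rcases hx.eq_or_lt with rfl | hx
    · rw [plateauDecay_of_le le_rfl, mul_assoc, ← rpow_add ht₀, add_neg_cancel, rpow_zero,
        mul_one]
    · rw [plateauDecay, if_neg hx.not_ge]
  rw [intervalIntegral.integral_eq_sub_of_hasDerivAt_of_le h (f := plateauDecay u₀ t₀ β) ?_ ?_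
    (intervalIntegrable_plateauDecayDeriv hu₀ ht₀ hβ _ _), plateauDecay_of_le le_rfl]
  · refine ContinuousOn.congr ?_ fun x hx => hdecay x hx.1
    exact continuousOn_const.mul
      (continuousOn_id.rpow_const fun x hx => Or.inl (ht₀.trans_le hx.1).ne')
  · intro x hx
    have hd := ((hasDerivAt_rpow_const (p := -β) (Or.inl (ht₀.trans hx.1).ne')).const_mul
      (u₀ * t₀ ^ β)).congr_of_eventuallyEq
      (Filter.eventually_of_mem (Ioi_mem_nhds hx.1) fun y hy => hdecay y (le_of_lt hy))
    convert hd using 1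
    rw [plateauDecayDeriv, if_neg hx.1.not_ge]
    ring

theorem plateauDecay_eq_add_integral (hu₀ : 0 ≤ u₀) (ht₀ : 0 < t₀) (hβ : 0 ≤ β) (ha : a ≤ t₀)
    (t : ℝ) : plateauDecay u₀ t₀ β t = u₀ + ∫ τ in a..t, plateauDecayDeriv u₀ t₀ β τ := by
  rcases le_or_gt t t₀ with h | h
  · rw [plateauDecay_of_le h, integral_plateauDecayDeriv_of_le ha h, add_zero]
  · rw [← intervalIntegral.integral_add_adjacent_intervals
      (intervalIntegrable_plateauDecayDeriv hu₀ ht₀ hβ a t₀)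
      (intervalIntegrable_plateauDecayDeriv hu₀ ht₀ hβ t₀ t),
      integral_plateauDecayDeriv_of_le ha le_rfl, integral_plateauDecayDeriv_of_ge hu₀ ht₀ hβ h.le]
    ring

end PlateauDecay

theorem memory_le_reaction {α β γ ν u₀ t₀ t : ℝ} (hα : α < 2) (hβ : 0 ≤ β) (hβγ : β * γ = α)
    (hν : ν ≠ 0) (hu₀ : 0 < u₀) (ht₀pos : 0 < t₀)
    (ht₀ : t₀ ^ α = (u₀ ^ (1 - γ) / ν) *
      (gker (1 - α) (1/2) + β * 2 ^ (α + β) / Real.Gamma (2 - α)))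
    (h : t₀ < t) :
    u₀ * gker (1 - α) (t / 2) + β * u₀ * t₀ ^ β * (t / 2) ^ (-β - 1) * gker (2 - α) (t / 2)
      ≤ ν * plateauDecay u₀ t₀ β t ^ γ := by
  have ht : 0 < t := ht₀pos.trans h
  have hΓ : 0 < Gamma (2 - α) := Gamma_pos_of_pos (by linarith)
  set T := t ^ (-α) with hT
  have hT0 : 0 ≤ T := rpow_nonneg ht.le _
  have hhalf_rpow : (t / 2) ^ (-α) = 2 ^ α * T := by
    rw [div_rpow ht.le zero_le_two, rpow_neg zero_le_two, div_inv_eq_mul, mul_comm]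
  have hkernel : gker (1 - α) (t / 2) = T * gker (1 - α) (1 / 2) := by
    rw [div_eq_mul_one_div t 2, gker_mul ht.le (by norm_num), hT]
    ring_nf
  have htail : (t / 2) ^ (-β - 1) * gker (2 - α) (t / 2)
      = (t / 2) ^ (-β) * (2 ^ α * T) / Gamma (2 - α) := by
    rw [gker, ← hhalf_rpow, mul_div_assoc', ← rpow_add (by positivity),
      ← rpow_add (by positivity)]
    ring_nf
  have hratio : t₀ ^ β * (t / 2) ^ (-β) ≤ 2 ^ β := by
    rw [rpow_neg (by positivity), ← div_eq_mul_inv, ← div_rpow ht₀pos.le (by positivity)]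
    exact rpow_le_rpow (by positivity) ((div_le_iff₀ (by positivity)).2 (by linarith)) hβ
  have hreaction : ν * plateauDecay u₀ t₀ β t ^ γ
      = u₀ * T * (gker (1 - α) (1/2) + β * (2 ^ α * 2 ^ β) / Gamma (2 - α)) := by
    rw [plateauDecay_of_lt ht₀pos h, mul_rpow hu₀.le (by positivity),
      ← rpow_mul (by positivity), hβγ, div_rpow ht₀pos.le ht.le, ht₀, hT, rpow_neg ht.le,
      ← rpow_add two_pos]
    have hu : u₀ ^ γ * u₀ ^ (1 - γ) = u₀ := by
      rw [← rpow_add hu₀]; norm_num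
    field_simp
    linear_combination (2 ^ (α + β) * β + gker (1 - α) (1 / 2) * Gamma (2 - α)) * hu
  rw [hreaction, hkernel, mul_assoc _ ((t / 2) ^ (-β - 1)), htail]
  linear_combination mul_le_mul_of_nonneg_left hratio
    (by positivity : 0 ≤ β * u₀ * (2 ^ α * T) / Gamma (2 - α))

theorem conv_plateauDecayDeriv_add_nonneg {α ν γ u₀ t₀ : ℝ} (hα0 : 0 < α) (hα1 : α < 1)
    (hν : 0 < ν) (hγ : 0 < γ) (hu₀ : 0 < u₀) (ht₀pos : 0 < t₀)
    (ht₀ : t₀ ^ α = (u₀ ^ (1 - γ) / ν) *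
      (gker (1 - α) (1/2) + (α / γ) * 2 ^ (α + α / γ) / Real.Gamma (2 - α)))
    (t : ℝ) :
    0 ≤ conv (gker (1 - α)) (plateauDecayDeriv u₀ t₀ (α / γ)) t
      + ν * plateauDecay u₀ t₀ (α / γ) t ^ γ := by
  have hβ : 0 ≤ α / γ := by positivity
  have hw := plateauDecay_pos hu₀ ht₀pos (β := α / γ)
  rcases le_or_gt t t₀ with h | h
  · rw [conv_plateauDecayDeriv_of_le _ ht₀pos.le h, zero_add]
    exact mul_nonneg hν.le (rpow_nonneg (hw t).le _)
  have ht : 0 < t := ht₀pos.trans h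
  have hconv := sub_le_conv_gker (β := 1 - α) (by linarith) (by linarith) ht
    (intervalIntegrable_plateauDecayDeriv hu₀.le ht₀pos hβ 0 t)
    (fun τ _ => plateauDecayDeriv_nonpos hu₀.le ht₀pos hβ τ)
    (fun τ hτ => norm_plateauDecayDeriv_le hu₀.le ht₀pos hβ (half_pos ht) hτ.1)
  rw [show 1 - α + 1 = 2 - α by ring] at hconv
  have hdrop : -u₀ ≤ ∫ τ in 0..t / 2, plateauDecayDeriv u₀ t₀ (α / γ) τ := by
    linarith [hw (t / 2), plateauDecay_eq_add_integral hu₀.le ht₀pos hβ ht₀pos.le (t / 2)]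
  have hreaction := memory_le_reaction (by linarith) hβ (div_mul_cancel₀ α hγ.ne') hν.ne'
    hu₀ ht₀pos ht₀ h
  have hmemory := mul_le_mul_of_nonneg_left hdrop
    (gker_nonneg (by linarith : 0 < 1 - α) (half_pos ht).le)
  linarith

/-- The explicit function `w` (constant `u₀` on `[0,t₀]`, then `u₀ t₀^{α/γ} t^{-α/γ}`)
is a locally absolutely continuous, nonincreasing, strictly positive supersolution of
the fractional ODE `∂ₜ^α(u - u₀) + ν u^γ = 0`, i.e. `(g_{1-α} ⋆ ẇ)(t) + ν w(t)^γ ≥ 0`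
for a.a. `t > 0`. -/
theorem fractional_ode_supersolution
    (α ν γ u₀ : ℝ) (hα0 : 0 < α) (hα1 : α < 1) (hν : 0 < ν) (hγ : 0 < γ)
    (hu₀ : 0 < u₀)
    (t₀ : ℝ) (ht₀pos : 0 < t₀)
    (ht₀ : t₀ ^ α = (u₀ ^ (1 - γ) / ν) *
      (gker (1 - α) (1/2) + (α / γ) * 2 ^ (α + α / γ) / Real.Gamma (2 - α)))
    (w : ℝ → ℝ)
    (hw : w = fun t => if t ≤ t₀ then u₀ else u₀ * t₀ ^ (α / γ) * t ^ (-(α / γ))) :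
    w 0 = u₀ ∧ AntitoneOn w (Ici 0) ∧ (∀ t, 0 ≤ t → 0 < w t) ∧
    ∃ w' : ℝ → ℝ,
      (∀ T, 0 < T → IntegrableOn w' (Icc 0 T)) ∧
      (∀ t, 0 ≤ t → w t = u₀ + ∫ τ in (0:ℝ)..t, w' τ) ∧
      (∀ᵐ t ∂(volume.restrict (Ioi (0:ℝ))),
        0 ≤ conv (gker (1 - α)) w' t + ν * w t ^ γ) := by
  have hβ : 0 ≤ α / γ := by positivity
  have hw' : w = plateauDecay u₀ t₀ (α / γ) := hw
  subst hw'
  refine ⟨plateauDecay_of_le ht₀pos.le,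
    (antitone_plateauDecay hu₀.le ht₀pos hβ).antitoneOn _,
    fun t _ => plateauDecay_pos hu₀ ht₀pos t,
    plateauDecayDeriv u₀ t₀ (α / γ),
    fun T hT => (intervalIntegrable_iff_integrableOn_Icc_of_le hT.le).1
      (intervalIntegrable_plateauDecayDeriv hu₀.le ht₀pos hβ 0 T),
    fun t _ => plateauDecay_eq_add_integral hu₀.le ht₀pos hβ ht₀pos.le t,
    ae_of_all _ (conv_plateauDecayDeriv_add_nonneg hα0 hα1 hν hγ hu₀ ht₀pos ht₀)⟩
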